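/- arXiv:1704.03787 — 2 statements merged into one kernel-verified Lean document; each statement's English description precedes it below -/
import Mathlib

section
/- Let σ be an automorphism of G(V), let W be a k-dimensional subspace of V with 2 ≤ k ≤ n−1, let {α₁, …, α_k} be a basis of W, and suppose σ(⟨α_i⟩) = ⟨β_i⟩ for 1 ≤ i ≤ k, where ⟨v⟩ denotes the 1-dimensional subspace spanned by a nonzero vector v. Then σ(W) = ⟨β₁, …, β_k⟩, the subspace spanned by β₁, …, β_k. -/
/-!
Inclusion is visible in the graph: `A ≤ B` iff every neighbour of `A` is a neighbour of `B`,
since for `x ∈ A \ B` a hyperplane containing `B` but not `x` is a neighbour of `A` and not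
of `B`. So an automorphism of `G(V)` is an order automorphism of the poset of nontrivial proper
subspaces and preserves least upper bounds. In that poset `W` is the least upper bound of the
lines `⟨αᵢ⟩`, and the least upper bound of the lines `⟨βᵢ⟩` is their span.
-/

/-- The subspace sum graph: vertices are the nontrivial proper subspaces of `V`,
two distinct vertices being adjacent iff their sum is `V`. -/
def sumGraph (F V : Type*) [Field F] [AddCommGroup V] [Module F V] :
    SimpleGraph {W : Submodule F V // W ≠ ⊥ ∧ W ≠ ⊤} where
  Adj W₁ W₂ := W₁ ≠ W₂ ∧ W₁.1 ⊔ W₂.1 = ⊤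
  symm := ⟨fun a b h => ⟨h.1.symm, by rw [sup_comm]; exact h.2⟩⟩
  loopless := ⟨fun a h => h.1 rfl⟩

theorem Submodule.exists_hyperplane_of_notMem {F V : Type*} [Field F] [AddCommGroup V]
    [Module F V] {B : Submodule F V} {x : V} (hx : x ∉ B) :
    ∃ H : Submodule F V, B ≤ H ∧ x ∉ H ∧ F ∙ x ⊔ H = ⊤ := by
  obtain ⟨f, hfx, hfB⟩ := Submodule.exists_dual_map_eq_bot_of_notMem hx inferInstance
  exact ⟨LinearMap.ker f, LinearMap.le_ker_iff_map.mpr hfB, hfx,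
    LinearMap.span_singleton_sup_ker_eq_top f hfx⟩

namespace sumGraph

variable {F V : Type*} [Field F] [AddCommGroup V] [Module F V]

variable (F V) in
abbrev Vertex : Type _ := {W : Submodule F V // W ≠ ⊥ ∧ W ≠ ⊤}

theorem le_iff_forall_adj {A B : Vertex F V} :
    A ≤ B ↔ ∀ U, (sumGraph F V).Adj U A → (sumGraph F V).Adj U B := by
  refine ⟨fun hAB U ⟨_, hUA⟩ => ?_, fun h => ?_⟩
  · have hUB : U.1 ⊔ B.1 = ⊤ := top_unique (hUA.ge.trans (sup_le_sup_left hAB _))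
    exact ⟨fun hU => B.2.2 (by rwa [hU, sup_idem] at hUB), hUB⟩
  · by_contra hAB
    obtain ⟨x, hxA, hxB⟩ :=
      SetLike.not_le_iff_exists.mp (Subtype.coe_le_coe.not.mpr hAB)
    obtain ⟨H, hBH, hxH, hH⟩ := Submodule.exists_hyperplane_of_notMem hxB
    have hH_ne_bot : H ≠ ⊥ := fun h => B.2.1 (le_bot_iff.mp (h ▸ hBH))
    have hH_ne_top : H ≠ ⊤ := fun h => hxH (h ▸ Submodule.mem_top)
    have hxA' : F ∙ x ≤ A.1 := (Submodule.span_singleton_le_iff_mem _ _).mpr hxA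
    have hHA : H ⊔ A.1 = ⊤ :=
      top_unique <| hH.ge.trans <| (sup_le_sup_right hxA' H).trans (sup_comm _ _).le
    have hH_ne_A : (⟨H, hH_ne_bot, hH_ne_top⟩ : Vertex F V) ≠ A := by
      rintro rfl
      exact hxH hxA
    have hHB := (h ⟨H, hH_ne_bot, hH_ne_top⟩ ⟨hH_ne_A, hHA⟩).2
    exact hH_ne_top (top_unique (hHB ▸ sup_le le_rfl hBH))

def orderIsoOfIso (σ : sumGraph F V ≃g sumGraph F V) : Vertex F V ≃o Vertex F V where
  toEquiv := σ.toEquiv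
  map_rel_iff' {A B} := by
    change σ A ≤ σ B ↔ A ≤ B
    rw [le_iff_forall_adj, le_iff_forall_adj, σ.surjective.forall]
    simp only [σ.map_adj_iff]

theorem isLUB_iff_coe_eq_sSup {S : Set (Vertex F V)} {X : Vertex F V} (hS : S.Nonempty) :
    IsLUB S X ↔ X.1 = sSup (Subtype.val '' S) := by
  set Y := sSup (Subtype.val '' S)
  have le_Y {s} (hs : s ∈ S) : s.1 ≤ Y := le_sSup ⟨s, hs, rfl⟩
  have Y_le {Z} (hZ : Z ∈ upperBounds S) : Y ≤ Z.1 := sSup_le <| by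
    rintro _ ⟨s, hs, rfl⟩
    exact hZ hs
  refine ⟨fun hX => ?_, fun hX =>
    ⟨fun s hs => (le_Y hs).trans hX.ge, fun Z hZ => hX.le.trans (Y_le hZ)⟩⟩
  obtain ⟨s, hs⟩ := hS
  have hY : Y ≠ ⊥ ∧ Y ≠ ⊤ :=
    ⟨fun h => s.2.1 (le_bot_iff.mp ((le_Y hs).trans h.le)),
      fun h => X.2.2 (top_unique (h.ge.trans (Y_le hX.1)))⟩
  have hY_ub : (⟨Y, hY⟩ : Vertex F V) ∈ upperBounds S :=
    fun s hs => le_Y hs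
  exact le_antisymm (hX.2 hY_ub) (Y_le hX.1)

end sumGraph

theorem stmt_5_general (F V : Type*) [Field F] [AddCommGroup V] [Module F V]
    (σ : sumGraph F V ≃g sumGraph F V)
    (k : ℕ)
    (W : Submodule F V)
    (α β : Fin k → V)
    (hli : LinearIndependent F α) (hspan : Submodule.span F (Set.range α) = W)
    (hσ : ∀ (i : Fin k) (h : Submodule.span F {α i} ≠ ⊥ ∧ Submodule.span F {α i} ≠ ⊤),
      (σ ⟨Submodule.span F {α i}, h⟩).1 = Submodule.span F {β i}) :
    ∀ (hWv : W ≠ ⊥ ∧ W ≠ ⊤),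
      (σ ⟨W, hWv⟩).1 = Submodule.span F (Set.range β) := by
  intro hWv
  have hαW (i : Fin k) : F ∙ α i ≤ W :=
    hspan ▸ Submodule.span_mono (Set.singleton_subset_iff.mpr ⟨i, rfl⟩)
  have hα (i : Fin k) : F ∙ α i ≠ ⊥ ∧ F ∙ α i ≠ ⊤ :=
    ⟨by simpa using hli.ne_zero i, fun h => hWv.2 (top_unique (h ▸ hαW i))⟩
  have : Nonempty (Fin k) := by
    by_contra h
    rw [not_nonempty_iff] at h
    exact hWv.1 (by rw [← hspan, Set.range_eq_empty, Submodule.span_empty])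
  let a (i : Fin k) : sumGraph.Vertex F V := ⟨F ∙ α i, hα i⟩
  have hW : IsLUB (Set.range a) ⟨W, hWv⟩ := by
    rw [sumGraph.isLUB_iff_coe_eq_sSup (Set.range_nonempty a), ← Set.range_comp, sSup_range]
    exact hspan.symm.trans Submodule.span_range_eq_iSup
  have hσW : (σ ⟨W, hWv⟩).1 = ⨆ i, (σ (a i)).1 := by
    have := (sumGraph.orderIsoOfIso σ).isLUB_image'.mpr hW
    rwa [sumGraph.isLUB_iff_coe_eq_sSup ((Set.range_nonempty a).image _), ← Set.range_comp,
      ← Set.range_comp, sSup_range] at this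
  rw [hσW, Submodule.span_range_eq_iSup]
  exact iSup_congr fun i => hσ i (hα i)

/-- if `σ` is an automorphism of `G(V)`, `W` is `k`-dimensional with
basis `α₁, …, α_k` (`2 ≤ k ≤ n-1`) and `σ⟨αᵢ⟩ = ⟨βᵢ⟩`, then
`σ(W) = ⟨β₁, …, β_k⟩`. -/
theorem stmt_5 (F V : Type*) [Field F] [Fintype F] [AddCommGroup V] [Module F V]
    [FiniteDimensional F V] (n : ℕ) (hn : 3 ≤ n) (hdim : Module.finrank F V = n)
    (σ : sumGraph F V ≃g sumGraph F V)
    (k : ℕ) (hk1 : 2 ≤ k) (hk2 : k ≤ n - 1)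
    (W : Submodule F V) (hW : Module.finrank F W = k)
    (α β : Fin k → V)
    (hli : LinearIndependent F α) (hspan : Submodule.span F (Set.range α) = W)
    (hσ : ∀ (i : Fin k) (h : Submodule.span F {α i} ≠ ⊥ ∧ Submodule.span F {α i} ≠ ⊤),
      (σ ⟨Submodule.span F {α i}, h⟩).1 = Submodule.span F {β i}) :
    ∀ (hWv : W ≠ ⊥ ∧ W ≠ ⊤),
      (σ ⟨W, hWv⟩).1 = Submodule.span F (Set.range β) :=
  stmt_5_general F V σ k W α β hli hspan hσ
end

section
/- Let σ be an automorphism of G(V), let W be a k-dimensional subspace of V with 2 ≤ k ≤ n−1, and let α be a nonzero vector of V. If ⟨α⟩ ⊆ W, then σ(⟨α⟩) ⊆ σ(W), where ⟨α⟩ denotes the 1-dimensional subspace spanned by α. -/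
/-!
A graph automorphism preserves inclusion of neighbourhoods, so it suffices that `A ≤ B`
holds exactly when every neighbour of `A` is a neighbour of `B`. One direction is monotonicity
of `⊔`. For the other, if `A ≰ B`, let `C` be a complement of `B ⊔ A` and `U = B ⊔ C`. Then
`U ⊔ A = ⊤`, while the modular law gives `U ⊓ (B ⊔ A) = B`, so `U ≠ ⊤`; thus `U` is a
neighbour of `A` but not of `B`.
-/

theorem exists_le_sup_eq_top_ne_top {L : Type*} [Lattice L] [BoundedOrder L]
    [IsModularLattice L] [ComplementedLattice L] {a b : L} (h : ¬a ≤ b) :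
    ∃ u, b ≤ u ∧ u ⊔ a = ⊤ ∧ u ≠ ⊤ := by
  obtain ⟨c, hc⟩ := exists_isCompl (b ⊔ a)
  refine ⟨b ⊔ c, le_sup_left, ?_, fun htop => h ?_⟩
  · rw [sup_right_comm, hc.sup_eq_top]
  · have hmod : (b ⊔ c) ⊓ (b ⊔ a) = b := by
      rw [sup_inf_assoc_of_le c le_sup_left, inf_comm, hc.inf_eq_bot, sup_bot_eq]
    rw [htop, top_inf_eq] at hmod
    exact hmod ▸ le_sup_right

theorem SimpleGraph.Iso.forall_adj_imp_iff {V W : Type*} {G : SimpleGraph V}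
    {G' : SimpleGraph W} (σ : G ≃g G') (a b : V) :
    (∀ u, G'.Adj u (σ a) → G'.Adj u (σ b)) ↔ ∀ u, G.Adj u a → G.Adj u b := by
  simp only [σ.surjective.forall, σ.map_adj_iff]

namespace sumGraph

variable {F V : Type*} [Field F] [AddCommGroup V] [Module F V]

theorem adj_of_adj_of_le {A B U : {W : Submodule F V // W ≠ ⊥ ∧ W ≠ ⊤}}
    (hAB : A.1 ≤ B.1) (hUA : (sumGraph F V).Adj U A) : (sumGraph F V).Adj U B := by
  have hUB : U.1 ⊔ B.1 = ⊤ := top_le_iff.mp (hUA.2.ge.trans (sup_le_sup_left hAB _))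
  refine ⟨fun hU => B.2.2 ?_, hUB⟩
  rwa [hU, sup_idem] at hUB

theorem le_iff_forall_adj_imp (A B : {W : Submodule F V // W ≠ ⊥ ∧ W ≠ ⊤}) :
    A.1 ≤ B.1 ↔ ∀ U, (sumGraph F V).Adj U A → (sumGraph F V).Adj U B := by
  refine ⟨fun hAB _ => adj_of_adj_of_le hAB, fun h => ?_⟩
  by_contra hAB
  obtain ⟨U, hBU, hUA, hU⟩ := exists_le_sup_eq_top_ne_top hAB
  have hUA_ne : (U : Submodule F V) ≠ A.1 := fun hUA_eq =>
    A.2.2 (by rwa [hUA_eq, sup_idem] at hUA)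
  have hUB := h ⟨U, ne_bot_of_le_ne_bot B.2.1 hBU, hU⟩
    ⟨fun hUA_eq => hUA_ne (congrArg Subtype.val hUA_eq), hUA⟩
  exact hU (by simpa only [sup_eq_left.mpr hBU] using hUB.2)

theorem iso_le_iff (σ : sumGraph F V ≃g sumGraph F V)
    (A B : {W : Submodule F V // W ≠ ⊥ ∧ W ≠ ⊤}) :
    (σ A).1 ≤ (σ B).1 ↔ A.1 ≤ B.1 := by
  rw [le_iff_forall_adj_imp, le_iff_forall_adj_imp, σ.forall_adj_imp_iff]

end sumGraph

theorem stmt_6_general (F V : Type*) [Field F] [AddCommGroup V] [Module F V]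
    (σ : sumGraph F V ≃g sumGraph F V)
    (W : Submodule F V)
    (α : V) (hle : Submodule.span F {α} ≤ W) :
    ∀ (hαv : Submodule.span F {α} ≠ ⊥ ∧ Submodule.span F {α} ≠ ⊤)
      (hWv : W ≠ ⊥ ∧ W ≠ ⊤),
      (σ ⟨Submodule.span F {α}, hαv⟩).1 ≤ (σ ⟨W, hWv⟩).1 :=
  fun _ _ => (sumGraph.iso_le_iff σ _ _).2 hle

/-- if `σ` is an automorphism of `G(V)`, `W` is a `k`-dimensional
subspace (`2 ≤ k ≤ n-1`), `α ≠ 0` and `⟨α⟩ ⊆ W`, then `σ(⟨α⟩) ⊆ σ(W)`. -/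
theorem stmt_6 (F V : Type*) [Field F] [Fintype F] [AddCommGroup V] [Module F V]
    [FiniteDimensional F V] (n : ℕ) (hn : 3 ≤ n) (hdim : Module.finrank F V = n)
    (σ : sumGraph F V ≃g sumGraph F V)
    (k : ℕ) (hk1 : 2 ≤ k) (hk2 : k ≤ n - 1)
    (W : Submodule F V) (hW : Module.finrank F W = k)
    (α : V) (hα : α ≠ 0) (hle : Submodule.span F {α} ≤ W) :
    ∀ (hαv : Submodule.span F {α} ≠ ⊥ ∧ Submodule.span F {α} ≠ ⊤)
      (hWv : W ≠ ⊥ ∧ W ≠ ⊤),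
      (σ ⟨Submodule.span F {α}, hαv⟩).1 ≤ (σ ⟨W, hWv⟩).1 :=
  stmt_6_general F V σ W α hle
end
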